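/- Let n ≥ 2 and 1 ≤ r < n be integers. The Higman–Thompson group G_{n,r} acts transitively on each tail-equivalence class: for all x, y ∈ 𝔠_{n,r} with x ∼ y there exists g ∈ G_{n,r} with g(x) = y. -/
import Mathlib


open Set

namespace HigmanAut

/-- The one-sided infinite sequence space `𝔠_n` on `n` letters. -/
abbrev Cn (n : ℕ) : Type := ℕ → Fin n

/-- The Cantor space `𝔠_{n,r} = Fin r × (ℕ → Fin n)` (with the product topology,
`Fin r` and `Fin n` discrete). -/
abbrev CNR (n r : ℕ) : Type := Fin r × Cn n

/-- A word: a letter from `Fin r` together with a finite list over `Fin n`. -/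
abbrev Word (n r : ℕ) : Type := Fin r × List (Fin n)

/-- Self-homeomorphisms of `𝔠_{n,r}`. -/
abbrev Homeo (n r : ℕ) : Type := CNR n r ≃ₜ CNR n r

/-- Append a finite list to a word: `ν⌢w`. -/
def wApp {n r : ℕ} (ν : Word n r) (w : List (Fin n)) : Word n r := (ν.1, ν.2 ++ w)

/-- The point `ν⌢x` of `𝔠_{n,r}` determined by a word `ν` followed by `x ∈ 𝔠_n`. -/
def wCat {n r : ℕ} (ν : Word n r) (x : Cn n) : CNR n r :=
  (ν.1, fun i => if h : i < ν.2.length then ν.2.get ⟨i, h⟩ else x (i - ν.2.length))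

/-- The cone `U_ν` of a word `ν`. -/
def cone {n r : ℕ} (ν : Word n r) : Set (CNR n r) :=
  {p | p.1 = ν.1 ∧ ∀ (i : ℕ) (h : i < ν.2.length), p.2 i = ν.2.get ⟨i, h⟩}

/-- Membership in the Higman--Thompson group `G_{n,r}`: `g` is a prefix code map,
i.e. there are `k ≥ 1` and words `ν i`, `η i` whose cones partition `𝔠_{n,r}`
with `g(ν i ⌢ x) = η i ⌢ x` for all `i`, `x`. -/
def IsHigman {n r : ℕ} (g : Homeo n r) : Prop :=
  ∃ k : ℕ, 0 < k ∧ ∃ ν η : Fin k → Word n r,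
    (∀ p : CNR n r, ∃! i : Fin k, p ∈ cone (ν i)) ∧
    (∀ p : CNR n r, ∃! i : Fin k, p ∈ cone (η i)) ∧
    (∀ (i : Fin k) (x : Cn n), g (wCat (ν i) x) = wCat (η i) x)

/-- The Higman--Thompson group `G_{n,r}` as a set of homeomorphisms. -/
def higmanSet (n r : ℕ) : Set (Homeo n r) := {g | IsHigman g}

/-- Conjugation: in the paper's right-action notation this is `g ↦ h⁻¹ g h`
(as a left function, `x ↦ h (g (h⁻¹ x))`). -/
def conjH {n r : ℕ} (h g : Homeo n r) : Homeo n r := (h.symm.trans g).trans h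

/-- `h` acts in the same fashion on `U_α` and `U_β`: there are words `α'`, `β'`
and a common local action `f` with `h(α⌢x) = α'⌢f(x)` and `h(β⌢x) = β'⌢f(x)`. -/
def SameFashion {n r : ℕ} (h : Homeo n r) (α β : Word n r) : Prop :=
  ∃ (α' β' : Word n r) (f : Cn n → Cn n),
    (∀ x : Cn n, h (wCat α x) = wCat α' (f x)) ∧
    (∀ x : Cn n, h (wCat β x) = wCat β' (f x))

/-- Tail equivalence on `𝔠_{n,r}`. -/
def TailEq {n r : ℕ} (x y : CNR n r) : Prop :=
  ∃ (ν η : Word n r) (z : Cn n), x = wCat ν z ∧ y = wCat η z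

/-- `h` is pointwise canonical. -/
def PtwiseCanonical {n r : ℕ} (h : Homeo n r) : Prop :=
  ∀ x : CNR n r, ∃ (η₁ η₂ : Word n r) (y : Cn n), x = wCat η₁ y ∧ h x = wCat η₂ y

/-- `h` is densely canonical. -/
def DenselyCanonical {n r : ℕ} (h : Homeo n r) : Prop :=
  ∀ U : Set (CNR n r), IsOpen U → U.Nonempty →
    ∃ η ζ : Word n r, cone η ⊆ U ∧ ∀ x : Cn n, h (wCat η x) = wCat ζ x

/-- `h` belongs to `H_{n,r,∼}`: `x ∼ y` iff `h(x) ∼ h(y)`. -/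
def PreservesTailEq {n r : ℕ} (h : Homeo n r) : Prop :=
  ∀ x y : CNR n r, TailEq x y ↔ TailEq (h x) (h y)

/-- `ν` is a prefix of `η`, i.e. `U_η ⊆ U_ν`. -/
def WPrefix {n r : ℕ} (ν η : Word n r) : Prop := cone η ⊆ cone ν

/-- Two words are incomparable if neither is a prefix of the other. -/
def Incomp {n r : ℕ} (ν η : Word n r) : Prop := ¬ WPrefix ν η ∧ ¬ WPrefix η ν

section Aux

variable {n r : ℕ}

lemma mem_cone_iff {ν : Word n r} {p : CNR n r} :
    p ∈ cone ν ↔ p.1 = ν.1 ∧ ∀ (i : ℕ) (h : i < ν.2.length), p.2 i = ν.2.get ⟨i, h⟩ :=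
  Iff.rfl

lemma wCat_mem_cone (ν : Word n r) (x : Cn n) : wCat ν x ∈ cone ν := by
  refine ⟨rfl, fun i h => ?_⟩
  simp [wCat, h]

lemma wCat_snd_add (ν : Word n r) (x : Cn n) (i : ℕ) :
    (wCat ν x).2 (i + ν.2.length) = x i := by
  have h : ¬ (i + ν.2.length < ν.2.length) := by omega
  simp [wCat, h]

lemma wCat_eq_self {ν : Word n r} {p : CNR n r} (hp : p ∈ cone ν) :
    wCat ν (fun i => p.2 (i + ν.2.length)) = p := by
  obtain ⟨h1, h2⟩ := hp
  refine Prod.ext h1.symm (funext fun i => ?_)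
  by_cases h : i < ν.2.length
  · simp only [wCat, dif_pos h]
    exact (h2 i h).symm
  · have hi : i - ν.2.length + ν.2.length = i := by omega
    simp [wCat, h, hi]

lemma decomp (p : CNR n r) (m : ℕ) :
    p = wCat (p.1, List.ofFn fun i : Fin m => p.2 i) (fun i => p.2 (i + m)) := by
  refine Prod.ext rfl (funext fun i => ?_)
  by_cases h : i < m
  · simp [wCat, h]
  · have hi : i - m + m = i := by omega
    simp [wCat, h, hi]

lemma isClopen_cone (ν : Word n r) : IsClopen (cone ν) := by
  have hco : cone ν = (Prod.fst ⁻¹' {ν.1}) ∩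
      ⋂ i : Fin ν.2.length, (fun p : CNR n r => p.2 i) ⁻¹' {ν.2.get i} := by
    ext p
    simp only [Set.mem_inter_iff, Set.mem_iInter, Set.mem_preimage, Set.mem_singleton_iff,
      mem_cone_iff]
    constructor
    · rintro ⟨h1, h2⟩; exact ⟨h1, fun i => h2 i i.2⟩
    · rintro ⟨h1, h2⟩; exact ⟨h1, fun i h => h2 ⟨i, h⟩⟩
  rw [hco]
  refine IsClopen.inter ?_ (isClopen_iInter_of_finite fun i => ?_)
  · exact (isClopen_discrete _).preimage continuous_fst
  · exact (isClopen_discrete _).preimage ((continuous_apply _).comp continuous_snd)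

open Classical in
/-- The underlying map swapping two disjoint cones. -/
noncomputable def swapFun (α β : Word n r) (p : CNR n r) : CNR n r :=
  if p ∈ cone α then wCat β (fun i => p.2 (i + α.2.length))
  else if p ∈ cone β then wCat α (fun i => p.2 (i + β.2.length))
  else p

lemma swapFun_cat_left (α β : Word n r) (x : Cn n) :
    swapFun α β (wCat α x) = wCat β x := by
  have h := wCat_mem_cone α x
  rw [swapFun, if_pos h]
  congr 1
  funext i
  exact wCat_snd_add α x i

lemma swapFun_cat_right (α β : Word n r)
    (hd : ∀ p : CNR n r, p ∈ cone α → p ∈ cone β → False) (x : Cn n) :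
    swapFun α β (wCat β x) = wCat α x := by
  have hβ := wCat_mem_cone β x
  have hnα : wCat β x ∉ cone α := fun h => hd _ h hβ
  rw [swapFun, if_neg hnα, if_pos hβ]
  congr 1
  funext i
  exact wCat_snd_add β x i

lemma swapFun_id (α β : Word n r) {p : CNR n r}
    (h1 : p ∉ cone α) (h2 : p ∉ cone β) : swapFun α β p = p := by
  rw [swapFun, if_neg h1, if_neg h2]

lemma swapFun_invol (α β : Word n r)
    (hd : ∀ p : CNR n r, p ∈ cone α → p ∈ cone β → False) (p : CNR n r) :
    swapFun α β (swapFun α β p) = p := by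
  by_cases h1 : p ∈ cone α
  · obtain ⟨x, hx⟩ : ∃ x, p = wCat α x := ⟨_, (wCat_eq_self h1).symm⟩
    rw [hx, swapFun_cat_left, swapFun_cat_right α β hd]
  by_cases h2 : p ∈ cone β
  · obtain ⟨x, hx⟩ : ∃ x, p = wCat β x := ⟨_, (wCat_eq_self h2).symm⟩
    rw [hx, swapFun_cat_right α β hd, swapFun_cat_left]
  · rw [swapFun_id α β h1 h2, swapFun_id α β h1 h2]

lemma continuous_wCat_drop (ν : Word n r) (m : ℕ) :
    Continuous (fun p : CNR n r => wCat ν (fun i => p.2 (i + m))) := by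
  unfold wCat
  refine Continuous.prodMk continuous_const (continuous_pi fun i => ?_)
  by_cases h : i < ν.2.length
  · simp only [dif_pos h]; exact continuous_const
  · simp only [dif_neg h]; exact (continuous_apply _).comp continuous_snd

lemma continuous_swapFun (α β : Word n r) : Continuous (swapFun α β) := by
  classical
  unfold swapFun
  apply Continuous.if
  · intro a ha
    rw [Set.setOf_mem_eq, (isClopen_cone α).frontier_eq] at ha
    exact absurd ha (Set.notMem_empty a)
  · exact continuous_wCat_drop β α.2.length
  · apply Continuous.if
    · intro a ha
      rw [Set.setOf_mem_eq, (isClopen_cone β).frontier_eq] at ha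
      exact absurd ha (Set.notMem_empty a)
    · exact continuous_wCat_drop α β.2.length
    · exact continuous_id

/-- The homeomorphism swapping two disjoint cones. -/
noncomputable def swapH (α β : Word n r)
    (hd : ∀ p : CNR n r, p ∈ cone α → p ∈ cone β → False) : Homeo n r :=
  ⟨⟨swapFun α β, swapFun α β, swapFun_invol α β hd, swapFun_invol α β hd⟩,
    continuous_swapFun α β, continuous_swapFun α β⟩

lemma swapH_apply (α β : Word n r)
    (hd : ∀ p : CNR n r, p ∈ cone α → p ∈ cone β → False) (p : CNR n r) :
    swapH α β hd p = swapFun α β p := rfl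

lemma existsUnique_comp_equiv {I J : Type*} (e : J ≃ I) {P : I → Prop}
    (h : ∃! i, P i) : ∃! j, P (e j) := by
  obtain ⟨i, hi, hu⟩ := h
  refine ⟨e.symm i, ?_, fun j hj => ?_⟩
  · show P (e (e.symm i))
    rwa [e.apply_symm_apply]
  · have h2 : e j = i := hu _ hj
    rw [← h2, e.symm_apply_apply]

lemma isHigman_of_index {g : Homeo n r} (I : Type) [Fintype I] [Nonempty I]
    (ν η : I → Word n r)
    (h1 : ∀ p, ∃! i, p ∈ cone (ν i)) (h2 : ∀ p, ∃! i, p ∈ cone (η i))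
    (h3 : ∀ i x, g (wCat (ν i) x) = wCat (η i) x) : IsHigman g :=
  ⟨Fintype.card I, Fintype.card_pos, ν ∘ (Fintype.equivFin I).symm,
    η ∘ (Fintype.equivFin I).symm,
    fun p => existsUnique_comp_equiv _ (h1 p),
    fun p => existsUnique_comp_equiv _ (h2 p),
    fun i x => h3 _ x⟩

def dw {n r : ℕ} (L : ℕ) (q : Fin r × (Fin L → Fin n)) : Word n r := (q.1, List.ofFn q.2)

def qof {n r : ℕ} (L : ℕ) (p : CNR n r) : Fin r × (Fin L → Fin n) := (p.1, fun i => p.2 i)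

lemma mem_cone_dw_qof (L : ℕ) (p : CNR n r) : p ∈ cone (dw L (qof L p)) := by
  refine ⟨rfl, fun i h => ?_⟩
  simp only [dw, qof, List.length_ofFn] at h ⊢
  simp [List.get_eq_getElem, List.getElem_ofFn]

lemma eq_qof_of_mem {L : ℕ} {p : CNR n r} {q : Fin r × (Fin L → Fin n)}
    (hq : p ∈ cone (dw L q)) : q = qof L p := by
  obtain ⟨h1, h2⟩ := hq
  refine Prod.ext ?_ (funext fun i => ?_)
  · exact h1.symm
  · have hi : (i : ℕ) < (dw L q).2.length := by simp [dw, i.2]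
    have := h2 i hi
    simp only [dw, List.get_eq_getElem, List.getElem_ofFn] at this
    simp [qof, ← this]

lemma mem_cone_iff_subset {ν : Word n r} {L : ℕ} (hν : ν.2.length ≤ L) (p : CNR n r) :
    p ∈ cone ν ↔ cone (dw L (qof L p)) ⊆ cone ν := by
  constructor
  · rintro ⟨h1, h2⟩ p' hp'
    obtain ⟨h1', h2'⟩ := hp'
    refine ⟨h1'.trans h1, fun i h => ?_⟩
    have hi : i < (dw L (qof L p)).2.length := by
      simp only [dw, List.length_ofFn]
      exact lt_of_lt_of_le h hν
    have hthis := h2' i hi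
    simp only [dw, qof, List.get_eq_getElem, List.getElem_ofFn] at hthis
    rw [hthis]
    exact h2 i h
  · intro hsub'
    exact hsub' (mem_cone_dw_qof L p)

lemma swap_isHigman (α β : Word n r)
    (hd : ∀ p : CNR n r, p ∈ cone α → p ∈ cone β → False) :
    IsHigman (swapH α β hd) := by
  classical
  set L := max α.2.length β.2.length with hLdef
  have hLα : α.2.length ≤ L := le_max_left _ _
  have hLβ : β.2.length ≤ L := le_max_right _ _
  let D := {q : Fin r × (Fin L → Fin n) // ¬ cone (dw L q) ⊆ cone α ∧ ¬ cone (dw L q) ⊆ cone β}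
  let I : Type := Bool ⊕ D
  let W : I → Word n r := Sum.elim (fun b => if b then α else β) (fun d => dw L d.1)
  have hWt : W (Sum.inl true) = α := rfl
  have hWf : W (Sum.inl false) = β := rfl
  have hWd : ∀ d : D, W (Sum.inr d) = dw L d.1 := fun d => rfl
  have hpart : ∀ p : CNR n r, ∃! i : I, p ∈ cone (W i) := by
    intro p
    by_cases hpα : p ∈ cone α
    · refine ⟨Sum.inl true, hpα, ?_⟩
      rintro (b | d) hj
      · cases b
        · exact absurd (hd p hpα hj) id
        · rfl
      · exfalso
        have hq : d.1 = qof L p := eq_qof_of_mem (q := d.1) hj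
        exact d.2.1 (hq ▸ (mem_cone_iff_subset hLα p).1 hpα)
    by_cases hpβ : p ∈ cone β
    · refine ⟨Sum.inl false, hpβ, ?_⟩
      rintro (b | d) hj
      · cases b
        · rfl
        · exact absurd (hd p hj hpβ) id
      · exfalso
        have hq : d.1 = qof L p := eq_qof_of_mem (q := d.1) hj
        exact d.2.2 (hq ▸ (mem_cone_iff_subset hLβ p).1 hpβ)
    · have h1 : ¬ cone (dw L (qof L p)) ⊆ cone α := fun h => hpα ((mem_cone_iff_subset hLα p).2 h)
      have h2 : ¬ cone (dw L (qof L p)) ⊆ cone β := fun h => hpβ ((mem_cone_iff_subset hLβ p).2 h)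
      refine ⟨Sum.inr ⟨qof L p, h1, h2⟩, mem_cone_dw_qof L p, ?_⟩
      rintro (b | d) hj
      · cases b
        · exact absurd hj hpβ
        · exact absurd hj hpα
      · have hq : d.1 = qof L p := eq_qof_of_mem (q := d.1) hj
        exact congrArg Sum.inr (Subtype.ext hq)
  let eb : Bool ≃ Bool := ⟨Bool.not, Bool.not, Bool.not_not, Bool.not_not⟩
  let e : I ≃ I := Equiv.sumCongr eb (Equiv.refl D)
  have he_t : e (Sum.inl true) = Sum.inl false := rfl
  have he_f : e (Sum.inl false) = Sum.inl true := rfl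
  have he_d : ∀ d : D, e (Sum.inr d) = Sum.inr d := fun d => rfl
  refine isHigman_of_index I W (W ∘ e) hpart
    (fun p => existsUnique_comp_equiv e (hpart p)) ?_
  rintro (b | d) x
  · cases b
    · show swapH α β hd (wCat (W (Sum.inl false)) x) = wCat (W (e (Sum.inl false))) x
      rw [hWf, he_f, hWt, swapH_apply]
      exact swapFun_cat_right α β hd x
    · show swapH α β hd (wCat (W (Sum.inl true)) x) = wCat (W (e (Sum.inl true))) x
      rw [hWt, he_t, hWf, swapH_apply]
      exact swapFun_cat_left α β x
  · show swapH α β hd (wCat (W (Sum.inr d)) x) = wCat (W (e (Sum.inr d))) x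
    rw [he_d, hWd, swapH_apply]
    have hmem : wCat (dw L d.1) x ∈ cone (dw L d.1) := wCat_mem_cone _ _
    have hq : d.1 = qof L (wCat (dw L d.1) x) := eq_qof_of_mem hmem
    have hnα : wCat (dw L d.1) x ∉ cone α := by
      intro h
      exact d.2.1 (hq ▸ (mem_cone_iff_subset hLα _).1 h)
    have hnβ : wCat (dw L d.1) x ∉ cone β := by
      intro h
      exact d.2.2 (hq ▸ (mem_cone_iff_subset hLβ _).1 h)
    exact swapFun_id α β hnα hnβ

lemma refl_isHigman (hr1 : 1 ≤ r) : IsHigman (Homeomorph.refl (CNR n r)) := by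
  refine ⟨r, hr1, fun i => (i, []), fun i => (i, []), ?_, ?_, fun i x => rfl⟩
  all_goals
    intro p
    exact ⟨p.1, ⟨rfl, fun i h => absurd h (by simp)⟩, fun j hj => hj.1.symm⟩

end Aux

/-- `G_{n,r}` acts transitively on each tail-equivalence class. -/
theorem higman_transitive_on_tail_classes (n r : ℕ) (hn : 2 ≤ n) (hr1 : 1 ≤ r)
    (hrn : r < n) :
    ∀ x y : CNR n r, TailEq x y → ∃ g : Homeo n r, IsHigman g ∧ g x = y := by
  intro x y hxy
  by_cases hxyeq : x = y
  · exact ⟨Homeomorph.refl _, refl_isHigman hr1, by simp [hxyeq]⟩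
  obtain ⟨ν, η, z, hx, hy⟩ := hxy
  have hxz : ∀ i, x.2 (i + ν.2.length) = z i := by
    intro i; rw [hx]; exact wCat_snd_add ν z i
  have hyz : ∀ i, y.2 (i + η.2.length) = z i := by
    intro i; rw [hy]; exact wCat_snd_add η z i
  obtain ⟨m, m', htail, hdisj⟩ : ∃ m m' : ℕ,
      (∀ i, x.2 (i + m) = y.2 (i + m')) ∧
      (∀ p : CNR n r, p ∈ cone ((x.1, List.ofFn fun i : Fin m => x.2 i) : Word n r) →
        p ∈ cone ((y.1, List.ofFn fun i : Fin m' => y.2 i) : Word n r) → False) := by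
    have key : ∀ k : ℕ, ∀ i, x.2 (i + (ν.2.length + k)) = y.2 (i + (η.2.length + k)) := by
      intro k i
      have h1 : i + (ν.2.length + k) = (i + k) + ν.2.length := by omega
      have h2 : i + (η.2.length + k) = (i + k) + η.2.length := by omega
      rw [h1, h2, hxz, hyz]
    by_cases hc : x.1 = y.1
    · have hsne : x.2 ≠ y.2 := by
        intro h
        exact hxyeq (Prod.ext hc h)
      obtain ⟨j, hj⟩ : ∃ j, x.2 j ≠ y.2 j := Function.ne_iff.1 hsne
      refine ⟨ν.2.length + (j + 1), η.2.length + (j + 1), key (j + 1), ?_⟩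
      rintro p ⟨h1, h2⟩ ⟨h1', h2'⟩
      have hjx : p.2 j = x.2 j := by
        have hlt : j < (List.ofFn fun i : Fin (ν.2.length + (j + 1)) => x.2 i).length := by
          simp
        have := h2 j hlt
        rw [List.get_eq_getElem, List.getElem_ofFn] at this
        exact this
      have hjy : p.2 j = y.2 j := by
        have hlt : j < (List.ofFn fun i : Fin (η.2.length + (j + 1)) => y.2 i).length := by
          simp
        have := h2' j hlt
        rw [List.get_eq_getElem, List.getElem_ofFn] at this
        exact this
      exact hj (hjx ▸ hjy)
    · refine ⟨ν.2.length + 0, η.2.length + 0, key 0, ?_⟩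
      rintro p ⟨h1, _⟩ ⟨h1', _⟩
      exact hc (h1 ▸ h1')
  set α : Word n r := (x.1, List.ofFn fun i : Fin m => x.2 i) with hα
  set β : Word n r := (y.1, List.ofFn fun i : Fin m' => y.2 i) with hβ
  have hx' : x = wCat α (fun i => x.2 (i + m)) := decomp x m
  have hy' : y = wCat β (fun i => y.2 (i + m')) := decomp y m'
  refine ⟨swapH α β hdisj, swap_isHigman α β hdisj, ?_⟩
  rw [swapH_apply]
  calc swapFun α β x = swapFun α β (wCat α (fun i => x.2 (i + m))) := by rw [← hx']
    _ = wCat β (fun i => x.2 (i + m)) := swapFun_cat_left α β _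
    _ = wCat β (fun i => y.2 (i + m')) := by
        congr 1
        funext i
        exact htail i
    _ = y := hy'.symm

end HigmanAut
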